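/- arXiv:1101.2342 — 3 statements merged into one kernel-verified Lean document; each statement's English description precedes it below -/
import Mathlib

section
/- Let σ̂ₙ > σ_{n+1} > 0 and σ̂_{n-1} ≥ σ̂ₙ. If σ̂_{n-1} ≥ σ_{n+1} + √(σ̂ₙ² - σ_{n+1}²), then √(σ̂_{n-1}² + σ_{n+1}²)/(σ̂_{n-1}² - σ_{n+1}²) ≤ 1/√(σ̂ₙ² - σ_{n+1}²). -/
/-- If `0 < σ_{n+1} < σ̂ₙ ≤ σ̂_{n-1}` and `σ̂_{n-1} ≥ σ_{n+1} + √(σ̂ₙ² - σ_{n+1}²)`, then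
`√(σ̂_{n-1}² + σ_{n+1}²)/(σ̂_{n-1}² - σ_{n+1}²) ≤ 1/√(σ̂ₙ² - σ_{n+1}²)`. -/
theorem stmt11 (σnm1 σn σn1 : ℝ) (h0 : 0 < σn1) (h1 : σn1 < σn) (h2 : σn ≤ σnm1)
    (h3 : σn1 + Real.sqrt (σn ^ 2 - σn1 ^ 2) ≤ σnm1) :
    Real.sqrt (σnm1 ^ 2 + σn1 ^ 2) / (σnm1 ^ 2 - σn1 ^ 2)
      ≤ 1 / Real.sqrt (σn ^ 2 - σn1 ^ 2) := by
  set s := Real.sqrt (σn ^ 2 - σn1 ^ 2) with hsdef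
  have hab : σn1 < σnm1 := h1.trans_le h2
  have hdiff : 0 < σnm1 ^ 2 - σn1 ^ 2 := by nlinarith
  have hs0 : 0 < s := Real.sqrt_pos.mpr (by nlinarith)
  rw [div_le_div_iff₀ hdiff hs0]
  have hsr : Real.sqrt (σnm1 ^ 2 + σn1 ^ 2) ≤ σnm1 + σn1 := by
    rw [show σnm1 + σn1 = Real.sqrt ((σnm1 + σn1) ^ 2) from
      (Real.sqrt_sq (by nlinarith)).symm]
    exact Real.sqrt_le_sqrt (by nlinarith)
  have hsle : s ≤ σnm1 - σn1 := by linarith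
  have := mul_le_mul hsr hsle hs0.le (by nlinarith : (0:ℝ) ≤ σnm1 + σn1)
  nlinarith [Real.sqrt_nonneg (σnm1 ^ 2 + σn1 ^ 2)]
end

section
/- Let x ∈ ℝⁿ with x ≠ 0, set α = 1/√(1+‖x‖²), and let sₙ > 0, and let V₁₁ be an invertible n×n real matrix whose singular values are 1 (with multiplicity n-1) and α. Let S be a diagonal matrix with diagonal entries 0 < s₁ ≤ … ≤ sₙ. Then sₙ ≤ ‖V₁₁⁻ᵀ S‖ ≤ α⁻¹ sₙ, where ‖·‖ is the spectral norm. -/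
open Matrix
open scoped Matrix.Norms.L2Operator

lemma dot_self_nonneg {m : ℕ} (v : Fin m → ℝ) : 0 ≤ v ⬝ᵥ v :=
  Finset.sum_nonneg fun i _ => mul_self_nonneg _

lemma euc_norm_eq {m : ℕ} (v : Fin m → ℝ) :
    ‖(WithLp.equiv 2 (Fin m → ℝ)).symm v‖ = Real.sqrt (v ⬝ᵥ v) := by
  rw [EuclideanSpace.norm_eq]
  congr 1
  simp [dotProduct, sq, WithLp.equiv_symm_apply, PiLp.toLp_apply, Real.norm_eq_abs, abs_mul_abs_self]

lemma opNorm_le_of_dot {m : ℕ} (A : Matrix (Fin m) (Fin m) ℝ) {C : ℝ} (hC : 0 ≤ C)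
    (h : ∀ v : Fin m → ℝ, (A *ᵥ v) ⬝ᵥ (A *ᵥ v) ≤ C^2 * (v ⬝ᵥ v)) : ‖A‖ ≤ C := by
  rw [Matrix.l2_opNorm_def]
  refine ContinuousLinearMap.opNorm_le_bound _ hC fun y => ?_
  simp only [LinearEquiv.trans_apply, LinearMap.coe_toContinuousLinearMap',
    Matrix.toEuclideanLin_apply]
  set v : Fin m → ℝ := (WithLp.equiv 2 _) y with hv
  have hy : y = (WithLp.equiv 2 (Fin m → ℝ)).symm v := rfl
  change ‖(WithLp.equiv 2 (Fin m → ℝ)).symm (A *ᵥ v)‖ ≤ C * ‖y‖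
  rw [euc_norm_eq, hy, euc_norm_eq]
  calc Real.sqrt ((A *ᵥ v) ⬝ᵥ (A *ᵥ v)) ≤ Real.sqrt (C^2 * (v ⬝ᵥ v)) :=
        Real.sqrt_le_sqrt (h v)
    _ = C * Real.sqrt (v ⬝ᵥ v) := by
        rw [Real.sqrt_mul (sq_nonneg C), Real.sqrt_sq hC]

lemma dot_le_of_opNorm {m : ℕ} (A : Matrix (Fin m) (Fin m) ℝ) {C : ℝ} (hC : 0 ≤ C)
    (h : ‖A‖ ≤ C) (v : Fin m → ℝ) :
    (A *ᵥ v) ⬝ᵥ (A *ᵥ v) ≤ C^2 * (v ⬝ᵥ v) := by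
  have h1 : ‖(EuclideanSpace.equiv (Fin m) ℝ).symm (A *ᵥ v)‖
      ≤ ‖A‖ * ‖(WithLp.equiv 2 (Fin m → ℝ)).symm v‖ := by
    have := Matrix.l2_opNorm_mulVec A ((WithLp.equiv 2 (Fin m → ℝ)).symm v)
    simpa using this
  have h2 : (EuclideanSpace.equiv (Fin m) ℝ).symm (A *ᵥ v)
      = (WithLp.equiv 2 (Fin m → ℝ)).symm (A *ᵥ v) := rfl
  rw [h2, euc_norm_eq, euc_norm_eq] at h1
  have h3 : Real.sqrt ((A *ᵥ v) ⬝ᵥ (A *ᵥ v)) ≤ C * Real.sqrt (v ⬝ᵥ v) :=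
    h1.trans (mul_le_mul_of_nonneg_right h (Real.sqrt_nonneg _))
  nlinarith [dot_self_nonneg (A *ᵥ v), dot_self_nonneg v,
    Real.sq_sqrt (dot_self_nonneg (A *ᵥ v)), Real.sq_sqrt (dot_self_nonneg v),
    Real.sqrt_nonneg (v ⬝ᵥ v), Real.sqrt_nonneg ((A *ᵥ v) ⬝ᵥ (A *ᵥ v))]

lemma opNorm_ge_of_dot {m : ℕ} (A : Matrix (Fin m) (Fin m) ℝ) {C : ℝ} (hC : 0 ≤ C)
    (v : Fin m → ℝ) (hv : v ⬝ᵥ v = 1) (h : C^2 ≤ (A *ᵥ v) ⬝ᵥ (A *ᵥ v)) : C ≤ ‖A‖ := by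
  have := dot_le_of_opNorm A (norm_nonneg A) le_rfl v
  rw [hv, mul_one] at this
  nlinarith [norm_nonneg A]
-- quadratic form bounds from eigenvalue bounds
lemma quad_bounds {m : ℕ} {A : Matrix (Fin m) (Fin m) ℝ} (hA : A.IsHermitian)
    {c₁ c₂ : ℝ} (h₁ : ∀ i, c₁ ≤ hA.eigenvalues i) (h₂ : ∀ i, hA.eigenvalues i ≤ c₂)
    (z : Fin m → ℝ) :
    c₁ * (z ⬝ᵥ z) ≤ z ⬝ᵥ (A *ᵥ z) ∧ z ⬝ᵥ (A *ᵥ z) ≤ c₂ * (z ⬝ᵥ z) := by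
  classical
  set U : Matrix (Fin m) (Fin m) ℝ := (hA.eigenvectorUnitary : Matrix (Fin m) (Fin m) ℝ) with hU
  have hUstar : star U = Uᵀ := by
    ext i j; simp [Matrix.conjTranspose_apply]
  have hUU : U * Uᵀ = 1 := by
    rw [← hUstar]
    exact (Matrix.mem_unitaryGroup_iff).mp hA.eigenvectorUnitary.2
  set w : Fin m → ℝ := Uᵀ *ᵥ z with hw
  have hdotU : ∀ y : Fin m → ℝ, z ⬝ᵥ (U *ᵥ y) = w ⬝ᵥ y := by
    intro y
    rw [Matrix.dotProduct_mulVec, hw, Matrix.mulVec_transpose]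
  have hww : w ⬝ᵥ w = z ⬝ᵥ z := by
    have : (w ⬝ᵥ w) = z ⬝ᵥ (U *ᵥ w) := by
      rw [hdotU]
    rw [this, hw, Matrix.mulVec_mulVec, hUU, Matrix.one_mulVec]
  have hform : z ⬝ᵥ (A *ᵥ z) = ∑ i, hA.eigenvalues i * (w i)^2 := by
    conv_lhs => rw [hA.spectral_theorem, Unitary.conjStarAlgAut_apply]
    rw [← hU, hUstar]
    rw [← Matrix.mulVec_mulVec, ← Matrix.mulVec_mulVec, hdotU]
    simp only [Matrix.mulVec_diagonal, dotProduct]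
    refine Finset.sum_congr rfl fun i _ => ?_
    simp [sq]
    ring
  constructor
  · rw [hform, ← hww]
    have : c₁ * (w ⬝ᵥ w) = ∑ i, c₁ * (w i)^2 := by
      simp [dotProduct, Finset.mul_sum, sq]
    rw [this]
    exact Finset.sum_le_sum fun i _ =>
      mul_le_mul_of_nonneg_right (h₁ i) (sq_nonneg _)
  · rw [hform, ← hww]
    have : c₂ * (w ⬝ᵥ w) = ∑ i, c₂ * (w i)^2 := by
      simp [dotProduct, Finset.mul_sum, sq]
    rw [this]
    exact Finset.sum_le_sum fun i _ =>
      mul_le_mul_of_nonneg_right (h₂ i) (sq_nonneg _)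


set_option maxHeartbeats 1000000 in
/-- Let `x ≠ 0`, `α = 1/√(1+‖x‖²)`, and let `V₁₁` be invertible with singular values
`1` (multiplicity `n-1`) and `α` (i.e. the eigenvalues of `V₁₁ᵀV₁₁` are `1` except
for one equal to `α²`). If `S = diag(s₁,…,sₙ)` with `0 < s₁ ≤ … ≤ sₙ`, then
`sₙ ≤ ‖V₁₁⁻ᵀ S‖ ≤ α⁻¹ sₙ` in the spectral norm. -/
theorem stmt15 {n : ℕ} (x : EuclideanSpace ℝ (Fin (n + 1))) (hx : x ≠ 0)
    (V₁₁ : Matrix (Fin (n + 1)) (Fin (n + 1)) ℝ) (hinv : IsUnit V₁₁)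
    (hH : (V₁₁ᵀ * V₁₁).IsHermitian)
    (heig : ∃ i₀, hH.eigenvalues i₀ = (1 / Real.sqrt (1 + ‖x‖ ^ 2)) ^ 2 ∧
      ∀ i, i ≠ i₀ → hH.eigenvalues i = 1)
    (s : Fin (n + 1) → ℝ) (hs0 : ∀ i, 0 < s i) (hmono : Monotone s) :
    s (Fin.last n) ≤ ‖(V₁₁⁻¹)ᵀ * Matrix.diagonal s‖ ∧
    ‖(V₁₁⁻¹)ᵀ * Matrix.diagonal s‖
      ≤ (1 / Real.sqrt (1 + ‖x‖ ^ 2))⁻¹ * s (Fin.last n) := by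
  set α : ℝ := 1 / Real.sqrt (1 + ‖x‖ ^ 2) with hα
  have hsq1 : (1:ℝ) ≤ Real.sqrt (1 + ‖x‖ ^ 2) := by
    nlinarith [Real.sq_sqrt (show (0:ℝ) ≤ 1 + ‖x‖ ^ 2 by positivity),
      Real.sqrt_nonneg (1 + ‖x‖ ^ 2), sq_nonneg ‖x‖]
  have hαpos : 0 < α := by
    rw [hα]; positivity
  have hαle : α ≤ 1 := by
    rw [hα, div_le_one (by linarith)]; linarith
  obtain ⟨i₀, h0, hrest⟩ := heig
  have hlow : ∀ i, α^2 ≤ hH.eigenvalues i := by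
    intro i; by_cases hi : i = i₀
    · rw [hi, h0]
    · rw [hrest i hi]; nlinarith
  have hupp : ∀ i, hH.eigenvalues i ≤ 1 := by
    intro i; by_cases hi : i = i₀
    · rw [hi, h0]; nlinarith
    · rw [hrest i hi]
  have hquad := fun z => quad_bounds hH hlow hupp z
  have hform : ∀ z : Fin (n+1) → ℝ,
      z ⬝ᵥ ((V₁₁ᵀ * V₁₁) *ᵥ z) = (V₁₁ *ᵥ z) ⬝ᵥ (V₁₁ *ᵥ z) := by
    intro z
    rw [← Matrix.mulVec_mulVec, Matrix.dotProduct_mulVec, Matrix.vecMul_transpose]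
  have hVdet : IsUnit V₁₁.det := (Matrix.isUnit_iff_isUnit_det V₁₁).mp hinv
  have hVV : V₁₁ * V₁₁⁻¹ = 1 := Matrix.mul_nonsing_inv _ hVdet
  have hV'V : V₁₁⁻¹ * V₁₁ = 1 := Matrix.nonsing_inv_mul _ hVdet
  have hconj : ∀ A : Matrix (Fin (n+1)) (Fin (n+1)) ℝ, Aᴴ = Aᵀ := by
    intro A; ext i j; simp [Matrix.conjTranspose_apply]
  have hVnorm : ‖V₁₁‖ ≤ 1 := by
    refine opNorm_le_of_dot _ zero_le_one fun v => ?_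
    have := (hquad v).2
    rw [hform] at this
    simpa using this
  have hVinv : ‖V₁₁⁻¹‖ ≤ α⁻¹ := by
    refine opNorm_le_of_dot _ (inv_nonneg.mpr hαpos.le) fun v => ?_
    have h1 := (hquad (V₁₁⁻¹ *ᵥ v)).1
    rw [hform, Matrix.mulVec_mulVec, hVV, Matrix.one_mulVec] at h1
    calc (V₁₁⁻¹ *ᵥ v) ⬝ᵥ (V₁₁⁻¹ *ᵥ v)
        = (α⁻¹)^2 * (α^2 * ((V₁₁⁻¹ *ᵥ v) ⬝ᵥ (V₁₁⁻¹ *ᵥ v))) := by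
          field_simp
      _ ≤ (α⁻¹)^2 * (v ⬝ᵥ v) := by
          exact mul_le_mul_of_nonneg_left h1 (by positivity)
  have hVtnorm : ‖V₁₁ᵀ‖ ≤ 1 := by
    rw [← hconj V₁₁, Matrix.l2_opNorm_conjTranspose]; exact hVnorm
  have hVitnorm : ‖(V₁₁⁻¹)ᵀ‖ ≤ α⁻¹ := by
    rw [← hconj V₁₁⁻¹, Matrix.l2_opNorm_conjTranspose]; exact hVinv
  have hdiag : ‖Matrix.diagonal s‖ ≤ s (Fin.last n) := by
    refine opNorm_le_of_dot _ (hs0 _).le fun v => ?_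
    simp only [dotProduct, Matrix.mulVec_diagonal, Finset.mul_sum]
    refine Finset.sum_le_sum fun i _ => ?_
    have h1 := hmono (Fin.le_last i)
    have h2 := hs0 i
    have h3 : s i ^ 2 ≤ s (Fin.last n) ^ 2 := pow_le_pow_left₀ h2.le h1 2
    nlinarith [sq_nonneg (v i)]
  constructor
  · -- lower bound
    set v : Fin (n+1) → ℝ := Pi.single (Fin.last n) 1 with hv
    have hv1 : v ⬝ᵥ v = 1 := by
      simp [hv, dotProduct, Pi.single_apply]
    set w : Fin (n+1) → ℝ := (V₁₁⁻¹)ᵀ *ᵥ v with hw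
    have hVtw : V₁₁ᵀ *ᵥ w = v := by
      rw [hw, Matrix.mulVec_mulVec, ← Matrix.transpose_mul, hV'V,
        Matrix.transpose_one, Matrix.one_mulVec]
    have hw1 : 1 ≤ w ⬝ᵥ w := by
      have := dot_le_of_opNorm V₁₁ᵀ zero_le_one hVtnorm w
      rw [hVtw, hv1] at this
      nlinarith
    have hdv : Matrix.diagonal s *ᵥ v = s (Fin.last n) • v := by
      funext i
      simp only [Matrix.mulVec_diagonal, Pi.smul_apply, smul_eq_mul, hv, Pi.single_apply]
      by_cases hi : i = Fin.last n
      · subst hi; simp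
      · simp [hi]
    have hMv : ((V₁₁⁻¹)ᵀ * Matrix.diagonal s) *ᵥ v = s (Fin.last n) • w := by
      rw [← Matrix.mulVec_mulVec, hdv, Matrix.mulVec_smul, hw]
    refine opNorm_ge_of_dot _ (hs0 _).le v hv1 ?_
    rw [hMv]
    have hdot : (s (Fin.last n) • w) ⬝ᵥ (s (Fin.last n) • w)
        = s (Fin.last n)^2 * (w ⬝ᵥ w) := by
      rw [smul_dotProduct, dotProduct_smul, smul_eq_mul, smul_eq_mul]; ring
    rw [hdot]
    nlinarith [hs0 (Fin.last n)]
  · -- upper bound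
    calc ‖(V₁₁⁻¹)ᵀ * Matrix.diagonal s‖
        ≤ ‖(V₁₁⁻¹)ᵀ‖ * ‖Matrix.diagonal s‖ := Matrix.l2_opNorm_mul _ _
      _ ≤ α⁻¹ * s (Fin.last n) := by
          exact mul_le_mul hVitnorm hdiag (norm_nonneg _) (inv_nonneg.mpr hαpos.le)
end

section
/- Let α ∈ (0,1) and let V be the (n+1)×(n+1) matrix built in block form as V = [[V₁₁, √(1-α²)·ūₙ], [√(1-α²)·v̄ₙᵀ, -α]], where V₁₁ = Ū diag(1,…,1,α) V̄ᵀ with Ū = [ū₁,…,ūₙ] and V̄ = [v̄₁,…,v̄ₙ] orthogonal n×n matrices. Then V is an orthogonal matrix. -/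
open Matrix

namespace Stmt19

noncomputable section

variable {n : ℕ}

def ee (n : ℕ) : Matrix (Fin (n+1)) (Fin 1) ℝ :=
  Matrix.of fun i _ => if i = Fin.last n then 1 else 0

lemma mul_ee (U : Matrix (Fin (n+1)) (Fin (n+1)) ℝ) :
    U * ee n = Matrix.of fun i (_ : Fin 1) => U i (Fin.last n) := by
  ext i j
  simp [ee, Matrix.mul_apply, mul_ite]

lemma diag_sq (α : ℝ) :
    Matrix.diagonal (fun i : Fin (n+1) => if i = Fin.last n then α else 1) *
      Matrix.diagonal (fun i : Fin (n+1) => if i = Fin.last n then α else 1) +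
      (1 - α^2) • (ee n * (ee n)ᵀ) = 1 := by
  rw [Matrix.diagonal_mul_diagonal]
  ext i j
  rcases eq_or_ne i j with rfl | hij
  · by_cases h : i = Fin.last n <;>
      simp [ee, Matrix.mul_apply, Matrix.one_apply, h] <;> ring
  · by_cases h : i = Fin.last n <;> by_cases h' : j = Fin.last n
    · exact absurd (h.trans h'.symm) hij
    · simp [ee, Matrix.mul_apply, Matrix.one_apply, Matrix.diagonal_apply, h, h', hij, Ne.symm h']
    · simp [ee, Matrix.mul_apply, Matrix.one_apply, Matrix.diagonal_apply, h, h', hij, Ne.symm hij]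
    · simp [ee, Matrix.mul_apply, Matrix.one_apply, Matrix.diagonal_apply, h, h', hij]

lemma diag_mul_ee (α : ℝ) :
    Matrix.diagonal (fun i : Fin (n+1) => if i = Fin.last n then α else 1) * ee n
      = α • ee n := by
  ext i j
  by_cases h : i = Fin.last n <;> simp [ee, Matrix.diagonal_mul, h]

lemma eeT_ee : (ee n)ᵀ * ee n = 1 := by
  ext i j
  fin_cases i; fin_cases j
  simp [ee, Matrix.mul_apply, ite_and]


lemma key {n : ℕ} (α : ℝ) (hα : α ^ 2 ≤ 1)
    (U V : Matrix (Fin (n + 1)) (Fin (n + 1)) ℝ)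
    (hU : Uᵀ * U = 1) (hVV : V * Vᵀ = 1) :
    (Matrix.fromBlocks (U * Matrix.diagonal (fun i => if i = Fin.last n then α else 1) * Vᵀ)
      (Matrix.of fun i (_ : Fin 1) => Real.sqrt (1 - α ^ 2) * U i (Fin.last n))
      (Matrix.of fun (_ : Fin 1) j => Real.sqrt (1 - α ^ 2) * V j (Fin.last n))
      (Matrix.of fun _ _ => -α))ᵀ *
    (Matrix.fromBlocks (U * Matrix.diagonal (fun i => if i = Fin.last n then α else 1) * Vᵀ)
      (Matrix.of fun i (_ : Fin 1) => Real.sqrt (1 - α ^ 2) * U i (Fin.last n))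
      (Matrix.of fun (_ : Fin 1) j => Real.sqrt (1 - α ^ 2) * V j (Fin.last n))
      (Matrix.of fun _ _ => -α)) = 1 := by
  set s := Real.sqrt (1 - α ^ 2) with hs
  have hs2 : s * s = 1 - α ^ 2 := Real.mul_self_sqrt (by linarith)
  set D := Matrix.diagonal (fun i : Fin (n+1) => if i = Fin.last n then α else 1) with hD
  have hDT : Dᵀ = D := Matrix.diagonal_transpose _
  have hUX : ∀ {m : Type} [Fintype m] (X : Matrix (Fin (n+1)) m ℝ), Uᵀ * (U * X) = X := by
    intro m _ X; rw [← Matrix.mul_assoc, hU, Matrix.one_mul]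
  have hDee : D * ee n = α • ee n := diag_mul_ee α
  have heeD : ∀ {m : Type} [Fintype m] (X : Matrix (Fin (n+1)) m ℝ),
      (ee n)ᵀ * (D * X) = α • ((ee n)ᵀ * X) := by
    intro m _ X
    rw [← Matrix.mul_assoc, ← hDT, ← Matrix.transpose_mul, hDee, Matrix.transpose_smul,
      Matrix.smul_mul]
  have hB : (Matrix.of fun i (_ : Fin 1) => s * U i (Fin.last n)) = s • (U * ee n) := by
    rw [mul_ee]; ext i j; simp
  have hC : (Matrix.of fun (_ : Fin 1) j => s * V j (Fin.last n)) = s • (V * ee n)ᵀ := by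
    rw [mul_ee]; ext i j; simp
  have hDb : (Matrix.of fun (_ : Fin 1) (_ : Fin 1) => -α) = (-α) • (1 : Matrix (Fin 1) (Fin 1) ℝ) := by
    ext i j; fin_cases i; fin_cases j; simp
  rw [hB, hC, hDb, Matrix.fromBlocks_transpose, Matrix.fromBlocks_multiply]
  have e11 : (U * D * Vᵀ)ᵀ * (U * D * Vᵀ) + (s • (V * ee n)ᵀ)ᵀ * (s • (V * ee n)ᵀ) = 1 := by
    simp only [Matrix.transpose_mul, Matrix.transpose_smul, Matrix.transpose_transpose, hDT,
      Matrix.smul_mul, Matrix.mul_smul, Matrix.mul_assoc, smul_smul]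
    rw [hUX, hs2]
    have h := congrArg (fun M => V * (M * Vᵀ)) (diag_sq (n := n) α)
    simp only [Matrix.add_mul, Matrix.smul_mul, Matrix.mul_add, Matrix.mul_smul,
      Matrix.mul_assoc, Matrix.one_mul] at h
    rw [h, hVV]
  have e12 : (U * D * Vᵀ)ᵀ * (s • (U * ee n)) + (s • (V * ee n)ᵀ)ᵀ * ((-α) • (1 : Matrix (Fin 1) (Fin 1) ℝ)) = 0 := by
    simp only [Matrix.transpose_mul, Matrix.transpose_smul, Matrix.transpose_transpose, hDT,
      Matrix.smul_mul, Matrix.mul_smul, Matrix.mul_assoc, smul_smul, Matrix.mul_one]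
    rw [hUX, hDee]
    simp only [Matrix.mul_smul, smul_smul]
    module
  have e21 : (s • (U * ee n))ᵀ * (U * D * Vᵀ) + ((-α) • (1 : Matrix (Fin 1) (Fin 1) ℝ))ᵀ * (s • (V * ee n)ᵀ) = 0 := by
    simp only [Matrix.transpose_mul, Matrix.transpose_smul, Matrix.transpose_transpose,
      Matrix.transpose_one, hDT, Matrix.smul_mul, Matrix.mul_smul, Matrix.mul_assoc,
      smul_smul, Matrix.mul_one, Matrix.one_mul]
    rw [hUX, heeD]
    simp only [Matrix.mul_smul, smul_smul]
    module
  have e22 : (s • (U * ee n))ᵀ * (s • (U * ee n)) + ((-α) • (1 : Matrix (Fin 1) (Fin 1) ℝ))ᵀ * ((-α) • (1 : Matrix (Fin 1) (Fin 1) ℝ)) = 1 := by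
    simp only [Matrix.transpose_mul, Matrix.transpose_smul, Matrix.transpose_transpose,
      Matrix.transpose_one, Matrix.smul_mul, Matrix.mul_smul, Matrix.mul_assoc,
      smul_smul, Matrix.mul_one, Matrix.one_mul]
    rw [hUX, eeT_ee, hs2, ← add_smul]
    have h : (1 - α ^ 2) + (-α * -α) = 1 := by ring
    rw [h, one_smul]
  rw [e11, e12, e21, e22, Matrix.fromBlocks_one]

end

end Stmt19

open Stmt19

/-- If `V₁₁ = Ū diag(1,…,1,α) V̄ᵀ` with `Ū, V̄` orthogonal and `α ∈ (0,1)`, then the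
block matrix `V = [[V₁₁, √(1-α²) ūₙ], [√(1-α²) v̄ₙᵀ, -α]]` is orthogonal. -/
theorem stmt19 {n : ℕ} (α : ℝ) (h0 : 0 < α) (h1 : α < 1)
    (U V : Matrix (Fin (n + 1)) (Fin (n + 1)) ℝ)
    (hU : Uᵀ * U = 1) (hV : Vᵀ * V = 1)
    (V₁₁ : Matrix (Fin (n + 1)) (Fin (n + 1)) ℝ)
    (hV₁₁ : V₁₁ = U * Matrix.diagonal (fun i => if i = Fin.last n then α else 1) * Vᵀ)
    (W : Matrix (Fin (n + 1) ⊕ Fin 1) (Fin (n + 1) ⊕ Fin 1) ℝ)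
    (hW : W = Matrix.fromBlocks V₁₁
      (Matrix.of fun i (_ : Fin 1) => Real.sqrt (1 - α ^ 2) * U i (Fin.last n))
      (Matrix.of fun (_ : Fin 1) j => Real.sqrt (1 - α ^ 2) * V j (Fin.last n))
      (Matrix.of fun _ _ => -α)) :
    Wᵀ * W = 1 ∧ W * Wᵀ = 1 := by
  have hα : α ^ 2 ≤ 1 := by nlinarith
  have hUU : U * Uᵀ = 1 := mul_eq_one_comm.mp hU
  have hVV : V * Vᵀ = 1 := mul_eq_one_comm.mp hV
  constructor
  · rw [hW, hV₁₁]
    exact key α hα U V hU hVV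
  · have hWT : Wᵀ = Matrix.fromBlocks
        (V * Matrix.diagonal (fun i => if i = Fin.last n then α else 1) * Uᵀ)
        (Matrix.of fun j (_ : Fin 1) => Real.sqrt (1 - α ^ 2) * V j (Fin.last n))
        (Matrix.of fun (_ : Fin 1) i => Real.sqrt (1 - α ^ 2) * U i (Fin.last n))
        (Matrix.of fun _ _ => -α) := by
      have t1 : (U * Matrix.diagonal (fun i => if i = Fin.last n then α else 1) * Vᵀ)ᵀ
          = V * Matrix.diagonal (fun i => if i = Fin.last n then α else 1) * Uᵀ := by
        rw [Matrix.transpose_mul, Matrix.transpose_mul, Matrix.diagonal_transpose,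
          Matrix.transpose_transpose, ← Matrix.mul_assoc]
      have t2 : (Matrix.of fun i (_ : Fin 1) => Real.sqrt (1 - α ^ 2) * U i (Fin.last n))ᵀ
          = (Matrix.of fun (_ : Fin 1) i => Real.sqrt (1 - α ^ 2) * U i (Fin.last n)) := by
        ext i j; simp
      have t3 : (Matrix.of fun (_ : Fin 1) j => Real.sqrt (1 - α ^ 2) * V j (Fin.last n))ᵀ
          = (Matrix.of fun j (_ : Fin 1) => Real.sqrt (1 - α ^ 2) * V j (Fin.last n)) := by
        ext i j; simp
      have t4 : (Matrix.of fun (_ : Fin 1) (_ : Fin 1) => -α)ᵀ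
          = (Matrix.of fun (_ : Fin 1) (_ : Fin 1) => -α) := by
        ext i j; simp
      rw [hW, hV₁₁, Matrix.fromBlocks_transpose, t1, t2, t3, t4]
    calc W * Wᵀ = (Wᵀ)ᵀ * Wᵀ := by rw [Matrix.transpose_transpose]
      _ = 1 := by rw [hWT]; exact key α hα V U hV hUU
end
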